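/- arXiv:2109.00786 — 4 statements merged into one kernel-verified Lean document; each statement's English description precedes it below -/
import Mathlib

section
/- Two noncommutative polynomials f = Σ_w f_w w and g = Σ_w g_w w in ℝ⟨x⟩ are cyclically equivalent if and only if for every word v one has Σ_{w ∼cyc v} f_w = Σ_{w ∼cyc v} g_w, where the sums range over all words w cyclically equivalent to v. -/
/-!
Send every word to its cyclic class: this gives a linear map `cyclicCoeffs` from `ℝ⟨x⟩` to
finitely supported functions on cyclic words, whose value at the class of `v` is the coefficient
sum over words cyclically equivalent to `v`. It kills every commutator, since on monomials
`uv` and `vu` are rotations of each other. Conversely, a word `w = ab` differs from the chosen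
representative `ba` of its class by the commutator `ab - ba`, so modulo commutators every
polynomial equals one supported on representatives, and that one is zero when `cyclicCoeffs`
vanishes. Hence the kernel of `cyclicCoeffs` is exactly the span of commutators.
-/

open scoped Matrix

/-- `ℝ⟨x₁,…,xₙ⟩`: noncommutative polynomials with real coefficients in `n`
noncommuting letters, realized as the monoid algebra of the free monoid on `Fin n`. -/
abbrev NCPoly (n : ℕ) : Type := MonoidAlgebra ℝ (FreeMonoid (Fin n))

/-- The canonical involution `f ↦ f⋆` on `ℝ⟨x⟩`: it fixes `ℝ` and each letter `xᵢ`
and reverses words. -/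
noncomputable def ncStar {n : ℕ} (f : NCPoly n) : NCPoly n :=
  MonoidAlgebra.ofCoeff (Finsupp.mapDomain FreeMonoid.reverse f.coeff)

/-- `degLE f d`: the nc polynomial `f` has degree at most `d`. -/
def degLE {n : ℕ} (f : NCPoly n) (d : ℕ) : Prop :=
  ∀ w ∈ f.coeff.support, FreeMonoid.length w ≤ d

/-- The `i`-th letter `xᵢ` as an nc polynomial. -/
noncomputable def ncX {n : ℕ} (i : Fin n) : NCPoly n :=
  MonoidAlgebra.of ℝ (FreeMonoid (Fin n)) (FreeMonoid.of i)

/-- A word `w` viewed as an nc polynomial (the monomial `w` with coefficient `1`). -/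
noncomputable def ncWord {n : ℕ} (w : FreeMonoid (Fin n)) : NCPoly n :=
  MonoidAlgebra.of ℝ (FreeMonoid (Fin n)) w

/-- Evaluation of an nc polynomial at a tuple `A = (A₁,…,Aₙ)` of square matrices:
the algebra homomorphism `ℝ⟨x⟩ → ℝ^{r×r}` sending `xᵢ` to `Aᵢ`. -/
noncomputable def ncEval {n r : ℕ} (A : Fin n → Matrix (Fin r) (Fin r) ℝ) :
    NCPoly n →ₐ[ℝ] Matrix (Fin r) (Fin r) ℝ :=
  MonoidAlgebra.lift ℝ _ (FreeMonoid (Fin n)) (FreeMonoid.lift A)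

/-- The cone `Σ` of sums of Hermitian squares `Σᵢ gᵢ⋆ gᵢ`. -/
def SOHS (n : ℕ) : Set (NCPoly n) :=
  { f | ∃ (k : ℕ) (g : Fin k → NCPoly n), f = ∑ i, ncStar (g i) * g i }

/-- The truncated cone `Σ_{2d}`: sums of Hermitian squares `Σᵢ gᵢ⋆ gᵢ` with `deg gᵢ ≤ d`. -/
def SOHSdeg (n d : ℕ) : Set (NCPoly n) :=
  { f | ∃ (k : ℕ) (g : Fin k → NCPoly n), (∀ i, degLE (g i) d) ∧ f = ∑ i, ncStar (g i) * g i }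

/-- `f ∼cyc g`: `f - g` is a finite sum of commutators. -/
def cycEq {n : ℕ} (f g : NCPoly n) : Prop :=
  ∃ (k : ℕ) (p q : Fin k → NCPoly n), f - g = ∑ i, (p i * q i - q i * p i)

/-- `Θ`: nc polynomials cyclically equivalent to a sum of Hermitian squares. -/
def Theta (n : ℕ) : Set (NCPoly n) :=
  { f | ∃ σ ∈ SOHS n, cycEq f σ }

/-- The quadratic module `Q(𝔤)` generated by a finite set `G` of nc polynomials:
all finite sums `Σᵢ pᵢ⋆ gᵢ pᵢ` with `gᵢ ∈ G ∪ {1}`. -/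
def QModule {n : ℕ} (G : Finset (NCPoly n)) : Set (NCPoly n) :=
  { f | ∃ (k : ℕ) (g p : Fin k → NCPoly n),
      (∀ i, g i ∈ (G : Set (NCPoly n)) ∪ {1}) ∧ f = ∑ i, ncStar (p i) * g i * p i }

/-- Words of degree (length) at most `d` in `n` letters. -/
def WordLE (n d : ℕ) : Type := { w : FreeMonoid (Fin n) // FreeMonoid.length w ≤ d }

noncomputable instance (n d : ℕ) : Fintype (WordLE n d) := by
  have h : {l : List (Fin n) | l.length ≤ d}.Finite := List.finite_length_le (Fin n) d
  have : Finite (WordLE n d) := h.to_subtype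
  exact Fintype.ofFinite _

instance (n d : ℕ) : DecidableEq (WordLE n d) := by
  unfold WordLE FreeMonoid; exact inferInstance

/-- Two words are cyclically equivalent iff one is a cyclic rotation of the other. -/
def wordCycEq {n : ℕ} (u v : FreeMonoid (Fin n)) : Prop :=
  ∃ w₁ w₂ : FreeMonoid (Fin n), u = w₁ * w₂ ∧ v = w₂ * w₁

open FreeMonoid

section Rotation

variable {α : Type*}

theorem List.isRotated_iff_exists_append {l l' : List α} :
    l ~r l' ↔ ∃ a b, l = a ++ b ∧ l' = b ++ a := by
  refine ⟨fun ⟨k, hk⟩ => ?_, fun ⟨a, b, hl, hl'⟩ => hl ▸ hl' ▸ List.isRotated_append⟩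
  refine ⟨l.take (k % l.length), l.drop (k % l.length), (List.take_append_drop _ _).symm, ?_⟩
  rw [← hk, List.rotate_eq_drop_append_take_mod]

def FreeMonoid.toCycle (w : FreeMonoid α) : Cycle α :=
  (w.toList : Cycle α)

theorem FreeMonoid.toCycle_eq_toCycle_iff {u v : FreeMonoid α} :
    u.toCycle = v.toCycle ↔ ∃ a b, u = a * b ∧ v = b * a := by
  simp only [toCycle, Cycle.coe_eq_coe, List.isRotated_iff_exists_append,
    toList.surjective.exists, ← toList_mul, toList.apply_eq_iff_eq]

noncomputable def Cycle.outWord (c : Cycle α) : FreeMonoid α :=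
  FreeMonoid.ofList (Quotient.out c)

theorem Cycle.toCycle_outWord (c : Cycle α) : c.outWord.toCycle = c := by
  rw [outWord, toCycle, toList_ofList]
  exact Quotient.out_eq c

theorem FreeMonoid.toCycle_surjective : Function.Surjective (toCycle : FreeMonoid α → Cycle α) :=
  fun c => ⟨c.outWord, c.toCycle_outWord⟩

end Rotation

section Commutators

variable (R A : Type*) [CommSemiring R] [Ring A] [Algebra R A]

def commutatorSpan : Submodule R A :=
  Submodule.span R {x | ∃ p q : A, x = p * q - q * p}

variable {R A}

theorem mul_sub_mul_mem_commutatorSpan (p q : A) : p * q - q * p ∈ commutatorSpan R A :=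
  Submodule.subset_span ⟨p, q, rfl⟩

theorem mem_commutatorSpan_iff {x : A} :
    x ∈ commutatorSpan R A ↔ ∃ (k : ℕ) (p q : Fin k → A), x = ∑ i, (p i * q i - q i * p i) := by
  refine ⟨fun hx => ?_, fun ⟨k, p, q, hx⟩ => hx ▸ Submodule.sum_mem _ fun i _ =>
    mul_sub_mul_mem_commutatorSpan (p i) (q i)⟩
  obtain ⟨k, c, y, rfl⟩ := Submodule.mem_span_set'.1 hx
  choose p q hy using fun i => (y i).2
  refine ⟨k, fun i => c i • p i, q, Finset.sum_congr rfl fun i _ => ?_⟩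
  rw [hy, smul_sub, smul_mul_assoc, mul_smul_comm]

end Commutators

section CyclicCoeffs

variable (R : Type*) {α : Type*} [CommRing R]

noncomputable def cyclicCoeffs : MonoidAlgebra R (FreeMonoid α) →ₗ[R] Cycle α →₀ R :=
  Finsupp.lmapDomain R R toCycle ∘ₗ (MonoidAlgebra.coeffLinearEquiv R).toLinearMap

variable {R}

@[simp]
theorem cyclicCoeffs_single (w : FreeMonoid α) (c : R) :
    cyclicCoeffs R (MonoidAlgebra.single w c) = Finsupp.single w.toCycle c := by
  simp [cyclicCoeffs]

theorem cyclicCoeffs_mul_comm (p q : MonoidAlgebra R (FreeMonoid α)) :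
    cyclicCoeffs R (p * q) = cyclicCoeffs R (q * p) := by
  induction p using MonoidAlgebra.induction_on with
  | of a =>
    induction q using MonoidAlgebra.induction_on with
    | of b => simp [toCycle_eq_toCycle_iff.2 ⟨a, b, rfl, rfl⟩]
    | add x y hx hy => simp only [mul_add, add_mul, map_add, hx, hy]
    | smul r x hx => simp only [mul_smul_comm, smul_mul_assoc, map_smul, hx]
  | add x y hx hy => simp only [mul_add, add_mul, map_add, hx, hy]
  | smul r x hx => simp only [mul_smul_comm, smul_mul_assoc, map_smul, hx]

theorem sub_mapDomain_outWord_mem_commutatorSpan (x : MonoidAlgebra R (FreeMonoid α)) :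
    x - MonoidAlgebra.mapDomainLinearMap R R (fun w => w.toCycle.outWord) x ∈
      commutatorSpan R (MonoidAlgebra R (FreeMonoid α)) := by
  induction x using MonoidAlgebra.induction_on with
  | of w =>
    obtain ⟨a, b, rfl, hba⟩ := toCycle_eq_toCycle_iff.1 (Cycle.toCycle_outWord w.toCycle).symm
    simpa [hba] using
      mul_sub_mul_mem_commutatorSpan (R := R) (MonoidAlgebra.of R _ a) (MonoidAlgebra.of R _ b)
  | add x y hx hy =>
    rw [map_add, add_sub_add_comm]
    exact add_mem hx hy
  | smul r x hx =>
    rw [map_smul, ← smul_sub]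
    exact Submodule.smul_mem _ r hx

theorem ker_cyclicCoeffs :
    LinearMap.ker (cyclicCoeffs R) = commutatorSpan R (MonoidAlgebra R (FreeMonoid α)) := by
  refine le_antisymm (fun x hx => ?_) (Submodule.span_le.2 ?_)
  · have hx' : MonoidAlgebra.mapDomainLinearMap R R (fun w => w.toCycle.outWord) x = 0 := by
      ext1
      rw [MonoidAlgebra.coeff_mapDomainLinearMap, ← Function.comp_def, Finsupp.mapDomain_comp]
      exact (congrArg (Finsupp.mapDomain Cycle.outWord) hx).trans Finsupp.mapDomain_zero
    simpa [hx'] using sub_mapDomain_outWord_mem_commutatorSpan x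
  · rintro _ ⟨p, q, rfl⟩
    rw [SetLike.mem_coe, LinearMap.mem_ker, map_sub, cyclicCoeffs_mul_comm, sub_self]

theorem cyclicCoeffs_apply_toCycle [DecidableEq α] (x : MonoidAlgebra R (FreeMonoid α))
    (v : FreeMonoid α) :
    cyclicCoeffs R x v.toCycle = ∑ w ∈ x.coeff.support with w.toCycle = v.toCycle, x.coeff w :=
  Finsupp.mapDomain_apply_eq_sum _ _

end CyclicCoeffs

theorem wordCycEq_iff_toCycle_eq {n : ℕ} {u v : FreeMonoid (Fin n)} :
    wordCycEq u v ↔ u.toCycle = v.toCycle :=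
  toCycle_eq_toCycle_iff.symm

open Classical in
/-- `f ∼cyc g` iff for every word `v`, the sums of the coefficients of `f`
resp. `g` over all words cyclically equivalent to `v` agree. -/
theorem cycEq_iff_cyclic_coeff_sums {n : ℕ} (f g : NCPoly n) :
    cycEq f g ↔
      ∀ v : FreeMonoid (Fin n),
        (∑ w ∈ f.coeff.support.filter (fun w => wordCycEq w v), f.coeff w) =
        (∑ w ∈ g.coeff.support.filter (fun w => wordCycEq w v), g.coeff w) := by
  have hsum (x : NCPoly n) (v : FreeMonoid (Fin n)) :
      ∑ w ∈ x.coeff.support.filter (fun w => wordCycEq w v), x.coeff w =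
        cyclicCoeffs ℝ x v.toCycle := by
    simp only [wordCycEq_iff_toCycle_eq, cyclicCoeffs_apply_toCycle]
  simp only [hsum]
  rw [cycEq, ← mem_commutatorSpan_iff (R := ℝ), ← ker_cyclicCoeffs, LinearMap.mem_ker, map_sub,
    sub_eq_zero, Finsupp.ext_iff, toCycle_surjective.forall]
end

section
/- For no τ ∈ ℝ is M_nc − τ cyclically equivalent to a sum of Hermitian squares, where M_nc(x,y) = x y⁴ x + y x⁴ y − 3 x y² x + 1 ∈ ℝ⟨x,y⟩; that is, M_nc − τ ∉ Θ for every τ ∈ ℝ. -/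
open scoped Matrix

/-- The noncommutative Motzkin polynomial `M_nc(x,y) = x y⁴ x + y x⁴ y - 3 x y² x + 1`. -/
noncomputable def Mnc : NCPoly 2 :=
  ncX 0 * ncX 1 ^ 4 * ncX 0 + ncX 1 * ncX 0 ^ 4 * ncX 1
    - (3 : ℝ) • (ncX 0 * ncX 1 ^ 2 * ncX 0) + 1

/-!
Abelianizing turns the problem into a commutative one: the algebra map `ℝ⟨x,y⟩ → ℝ[x,y]` sending
the letters to the variables kills commutators and sends `g⋆ g` to `g²`, so `M_nc - τ ∈ Θ` would
write the Motzkin polynomial `M - τ = x²y⁴ + x⁴y² - 3x²y² + 1 - τ` as a sum of squares `∑ pᵢ²`.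
Leading terms of a sum of squares cannot cancel, so comparing leading terms for the
degree-lexicographic order gives `deg pᵢ ≤ 3`, and comparing the coefficients of `x^{2k}` (and
`y^{2k}`) from the top down shows that no `pᵢ` contains a pure power of `x` or of `y`. After that,
`x²y²` can only arise in `∑ pᵢ²` as `xy · xy`, so its coefficient `-3` would equal `∑ᵢ cᵢ²`, where
`cᵢ` is the coefficient of `xy` in `pᵢ`.
-/

open MvPolynomial Finsupp

open scoped MonomialOrder

theorem FreeMonoid.lift_reverse {α M : Type*} [CommMonoid M] (f : α → M) (w : FreeMonoid α) :
    FreeMonoid.lift f w.reverse = FreeMonoid.lift f w := by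
  rw [FreeMonoid.lift_apply, FreeMonoid.lift_apply]
  exact (congrArg List.prod (List.map_reverse ..)).trans (List.prod_reverse _)

theorem Finsupp.eq_single_of_add_eq_single {σ : Type*} {β γ : σ →₀ ℕ} {j : σ} {n : ℕ}
    (h : β + γ = single j n) : β = single j (β j) := by
  have hle : β ≤ single j n := h ▸ le_self_add
  exact support_subset_singleton.1 ((support_mono hle).trans support_single_subset)

theorem Finsupp.eq_single_zero_add_single_one {M : Type*} [AddZeroClass M] (δ : Fin 2 →₀ M) :
    δ = single 0 (δ 0) + single 1 (δ 1) := by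
  ext i
  fin_cases i <;> simp

section Abelianize

variable {n : ℕ}

noncomputable def ncAbelianize : NCPoly n →ₐ[ℝ] MvPolynomial (Fin n) ℝ :=
  MonoidAlgebra.lift ℝ (MvPolynomial (Fin n) ℝ) (FreeMonoid (Fin n)) (FreeMonoid.lift X)

theorem ncAbelianize_ncX (i : Fin n) : ncAbelianize (ncX i) = X i := by
  rw [ncAbelianize, ncX, MonoidAlgebra.lift_of, FreeMonoid.lift_eval_of]

theorem ncAbelianize_ncStar (f : NCPoly n) : ncAbelianize (ncStar f) = ncAbelianize f := by
  rw [ncAbelianize, ncStar, MonoidAlgebra.lift_apply, MonoidAlgebra.lift_apply,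
    MonoidAlgebra.coeff_ofCoeff, Finsupp.sum_mapDomain_index (by simp) (by simp [add_smul])]
  simp only [FreeMonoid.lift_reverse]

theorem ncAbelianize_commutator (p q : NCPoly n) : ncAbelianize (p * q - q * p) = 0 := by
  rw [map_sub, map_mul, map_mul, mul_comm, sub_self]

theorem ncAbelianize_eq_of_cycEq {f g : NCPoly n} (h : cycEq f g) :
    ncAbelianize f = ncAbelianize g := by
  obtain ⟨k, p, q, hpq⟩ := h
  rw [← sub_eq_zero, ← map_sub, hpq, map_sum]
  exact Finset.sum_eq_zero fun i _ => ncAbelianize_commutator (p i) (q i)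

theorem exists_ncAbelianize_eq_sum_sq_of_mem_Theta {f : NCPoly n} (hf : f ∈ Theta n) :
    ∃ (k : ℕ) (p : Fin k → MvPolynomial (Fin n) ℝ), ncAbelianize f = ∑ i, p i ^ 2 := by
  obtain ⟨σ, ⟨k, g, rfl⟩, hcyc⟩ := hf
  refine ⟨k, fun i => ncAbelianize (g i), ?_⟩
  rw [ncAbelianize_eq_of_cycEq hcyc, map_sum]
  simp only [map_mul, ncAbelianize_ncStar, sq]

end Abelianize

section SumSq

variable {σ R ι : Type*}

theorem MvPolynomial.coeff_add_self_sum_sq [CommSemiring R] {s : Finset ι}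
    {p : ι → MvPolynomial σ R} {α : σ →₀ ℕ}
    (h : ∀ i ∈ s, ∀ β γ, β + γ = α + α → coeff β (p i) ≠ 0 → coeff γ (p i) ≠ 0 → β = α) :
    coeff (α + α) (∑ i ∈ s, p i ^ 2) = ∑ i ∈ s, coeff α (p i) ^ 2 := by
  classical
  rw [coeff_sum]
  refine Finset.sum_congr rfl fun i hi => ?_
  rw [sq, sq, coeff_mul, Finset.sum_eq_single (α, α) ?_ (by simp)]
  rintro ⟨β, γ⟩ hβγ hne
  rw [Finset.HasAntidiagonal.mem_antidiagonal] at hβγ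
  dsimp only at hβγ ⊢
  by_contra hprod
  obtain rfl := h i hi β γ hβγ (left_ne_zero_of_mul hprod) (right_ne_zero_of_mul hprod)
  exact hne (by rw [add_left_cancel hβγ])

variable [CommRing R] [LinearOrder R] [IsStrictOrderedRing R]

theorem MonomialOrder.degree_add_self_le_degree_sum_sq (m : MonomialOrder σ) {s : Finset ι}
    {p : ι → MvPolynomial σ R} {i : ι} (hi : i ∈ s) :
    m.degree (p i) + m.degree (p i) ≼[m] m.degree (∑ j ∈ s, p j ^ 2) := by
  obtain ⟨j, hj, hmax⟩ := s.exists_max_image (fun j => m.toSyn (m.degree (p j))) ⟨i, hi⟩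
  set α := m.degree (p j)
  have hle : m.toSyn (m.degree (p i) + m.degree (p i)) ≤ m.toSyn (α + α) := by
    rw [map_add, map_add]
    exact add_le_add (hmax i hi) (hmax i hi)
  by_cases hpj : p j = 0
  · have hα : α = 0 := by simp [α, hpj]
    rw [hα, add_zero, map_zero] at hle
    exact hle.trans (m.zero_le _)
  refine hle.trans (m.le_degree (MvPolynomial.mem_support_iff.2 ?_))
  have hcoeff : coeff (α + α) (∑ k ∈ s, p k ^ 2) = ∑ k ∈ s, coeff α (p k) ^ 2 := by
    rw [coeff_sum]
    refine Finset.sum_congr rfl fun k hk => ?_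
    rw [sq, sq, m.coeff_mul_of_add_of_degree_le (hmax k hk) (hmax k hk)]
  rw [hcoeff]
  refine (Finset.sum_pos' (fun k _ => sq_nonneg _) ⟨j, hj, ?_⟩).ne'
  exact sq_pos_iff.2 (m.coeff_degree_ne_zero_iff.2 hpj)

theorem MvPolynomial.two_mul_totalDegree_le_totalDegree_sum_sq [LinearOrder σ] [WellFoundedGT σ]
    {s : Finset ι} {p : ι → MvPolynomial σ R} {i : ι} (hi : i ∈ s) :
    2 * (p i).totalDegree ≤ (∑ j ∈ s, p j ^ 2).totalDegree := by
  rw [← degree_degLexDegree, ← degree_degLexDegree, two_mul, ← map_add]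
  exact DegLex.monotone_degree (MonomialOrder.degLex.degree_add_self_le_degree_sum_sq hi)

theorem MvPolynomial.coeff_single_eq_zero_of_sum_sq {s : Finset ι} {p : ι → MvPolynomial σ R}
    (j : σ) (hf : ∀ k, 0 < k → coeff (single j (k + k)) (∑ i ∈ s, p i ^ 2) = 0) {k : ℕ}
    (hk : 0 < k) : ∀ i ∈ s, coeff (single j k) (p i) = 0 := by
  induction k using Nat.strong_decreasing_induction with
  | base =>
    refine ⟨s.sup fun i => (p i).totalDegree, fun k hk _ i hi => coeff_eq_zero_of_totalDegree_lt ?_⟩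
    rw [← degree_apply, degree_single]
    exact (Finset.le_sup (f := fun i => (p i).totalDegree) hi).trans_lt hk
  | step k ih =>
    have hsum := hf k hk
    rw [single_add, coeff_add_self_sum_sq] at hsum
    · intro i hi
      exact pow_eq_zero_iff two_ne_zero |>.1
        ((Finset.sum_eq_zero_iff_of_nonneg fun i _ => sq_nonneg _).1 hsum i hi)
    · intro i hi β γ hβγ hβ hγ
      rw [← single_add] at hβγ
      have hsum' : β j + γ j = k + k := by simpa using congrArg (· j) hβγ
      rw [eq_single_of_add_eq_single hβγ] at hβ ⊢
      rw [eq_single_of_add_eq_single ((add_comm γ β).trans hβγ)] at hγ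
      congr 1
      by_contra hne
      rcases lt_or_gt_of_ne hne with hlt | hgt
      · exact hγ (ih (γ j) (by omega) (by omega) i hi)
      · exact hβ (ih (β j) hgt (by omega) i hi)

end SumSq

section Motzkin

noncomputable def motzkin : MvPolynomial (Fin 2) ℝ :=
  X 0 ^ 2 * X 1 ^ 4 + X 0 ^ 4 * X 1 ^ 2 - 3 * X 0 ^ 2 * X 1 ^ 2 + 1

theorem ncAbelianize_Mnc : ncAbelianize Mnc = motzkin := by
  simp only [Mnc, map_add, map_sub, map_mul, map_pow, map_smul, map_one, ncAbelianize_ncX,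
    smul_eq_C_mul, map_ofNat, motzkin]
  ring

theorem motzkin_eq_monomials : motzkin = monomial (single 0 2 + single 1 4) 1
    + monomial (single 0 4 + single 1 2) 1 - monomial (single 0 2 + single 1 2) 3 + 1 := by
  simp only [motzkin, X_pow_eq_monomial, monomial_mul, mul_one]
  rw [mul_assoc, monomial_mul, mul_one, ← map_ofNat C 3, C_mul_monomial, mul_one]

variable (τ : ℝ)

theorem coeff_single_add_self_motzkin_sub_C (j : Fin 2) {k : ℕ} (hk : 0 < k) :
    coeff (single j (k + k)) (motzkin - C τ) = 0 := by
  have hk' : 0 ≠ k + k := by omega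
  rw [motzkin_eq_monomials]
  fin_cases j <;>
    simp [coeff_monomial, coeff_C, coeff_one, Finsupp.ext_iff, Fin.forall_fin_two, hk']

theorem coeff_X0sq_X1sq_motzkin_sub_C :
    coeff (single 0 2 + single 1 2) (motzkin - C τ) = -3 := by
  rw [motzkin_eq_monomials]
  simp [coeff_monomial, coeff_C, Finsupp.ext_iff, Fin.forall_fin_two, coeff_one]

theorem totalDegree_motzkin_sub_C_le : (motzkin - C τ).totalDegree ≤ 6 := by
  refine (totalDegree_sub_C_le _ _).trans ?_
  rw [motzkin_eq_monomials]
  refine (totalDegree_add _ _).trans (max_le ((totalDegree_sub _ _).trans (max_le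
    ((totalDegree_add _ _).trans (max_le ?_ ?_)) ?_)) (by simp)) <;>
  exact (totalDegree_monomial_le _ _).trans (by simp [sum_add_index'])

theorem eq_X0_mul_X1_of_add_eq_X0sq_X1sq {R : Type*} [CommSemiring R]
    {p : MvPolynomial (Fin 2) R} (hdeg : p.totalDegree ≤ 3)
    (hpure : ∀ j k, 0 < k → coeff (single j k) p = 0) {β γ : Fin 2 →₀ ℕ}
    (h : β + γ = single 0 1 + single 1 1 + (single 0 1 + single 1 1)) (hβ : coeff β p ≠ 0)
    (hγ : coeff γ p ≠ 0) : β = single 0 1 + single 1 1 := by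
  have hsupp : ∀ δ, coeff δ p ≠ 0 →
      δ 0 + δ 1 ≤ 3 ∧ (δ 1 = 0 → δ 0 = 0) ∧ (δ 0 = 0 → δ 1 = 0) := by
    intro δ hδ
    have hdegδ : δ.degree ≤ 3 := (le_totalDegree (MvPolynomial.mem_support_iff.2 hδ)).trans hdeg
    rw [degree_eq_sum, Fin.sum_univ_two] at hdegδ
    rw [eq_single_zero_add_single_one δ] at hδ
    refine ⟨hdegδ, fun h1 => ?_, fun h0 => ?_⟩
    · by_contra h0
      exact hδ (by simpa [h1] using hpure 0 (δ 0) (by omega))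
    · by_contra h1
      exact hδ (by simpa [h0] using hpure 1 (δ 1) (by omega))
  have h0 : β 0 + γ 0 = 2 := by simpa using congrArg (· 0) h
  have h1 : β 1 + γ 1 = 2 := by simpa using congrArg (· 1) h
  have hβ' := hsupp β hβ
  have hγ' := hsupp γ hγ
  rw [eq_single_zero_add_single_one β]
  congr 2 <;> omega

theorem motzkin_sub_C_ne_sum_sq {ι : Type*} (s : Finset ι) (p : ι → MvPolynomial (Fin 2) ℝ) :
    motzkin - C τ ≠ ∑ i ∈ s, p i ^ 2 := by
  intro hf
  have hdeg : ∀ i ∈ s, (p i).totalDegree ≤ 3 := fun i hi => by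
    have hsq := two_mul_totalDegree_le_totalDegree_sum_sq (p := p) hi
    have hM := totalDegree_motzkin_sub_C_le τ
    rw [hf] at hM
    omega
  have hpure : ∀ i ∈ s, ∀ j k, 0 < k → coeff (single j k) (p i) = 0 := fun i hi j k hk =>
    coeff_single_eq_zero_of_sum_sq j (fun k hk => hf ▸ coeff_single_add_self_motzkin_sub_C τ j hk)
      hk i hi
  set xy : Fin 2 →₀ ℕ := single 0 1 + single 1 1
  have hxy2 : xy + xy = single 0 2 + single 1 2 := by
    ext i
    fin_cases i <;> simp [xy]
  have hcoeff := coeff_add_self_sum_sq (s := s) (p := p) (α := xy)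
    fun i hi _ _ h => eq_X0_mul_X1_of_add_eq_X0sq_X1sq (hdeg i hi) (hpure i hi) h
  rw [← hf, hxy2, coeff_X0sq_X1sq_motzkin_sub_C] at hcoeff
  have hnonneg := Finset.sum_nonneg fun i (_ : i ∈ s) => sq_nonneg (coeff xy (p i))
  linarith

end Motzkin

/-- For no `τ ∈ ℝ` is `M_nc - τ` cyclically equivalent to a sum of
Hermitian squares, i.e. `M_nc - τ ∉ Θ` for every `τ`. -/
theorem Mnc_sub_tau_not_in_Theta : ∀ τ : ℝ, Mnc - τ • 1 ∉ Theta 2 := by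
  intro τ h
  obtain ⟨k, p, hp⟩ := exists_ncAbelianize_eq_sum_sq_of_mem_Theta h
  rw [map_sub, ncAbelianize_Mnc, map_smul, map_one, smul_eq_C_mul, mul_one] at hp
  exact motzkin_sub_C_ne_sum_sq τ Finset.univ p hp
end

section
/- (Noncommutative Putinar Positivstellensatz.) Let 𝔤 be a finite set of symmetric elements of ℝ⟨x⟩ such that Q(𝔤) is Archimedean, and let f ∈ ℝ⟨x⟩ be symmetric. If for every Hilbert space H and every tuple A of bounded self-adjoint operators on H with g(A) positive for all g ∈ 𝔤, the operator f(A) is positive definite (i.e., ⟨f(A)v, v⟩ > 0 for every nonzero v ∈ H), then f ∈ Q(𝔤). -/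
open scoped Matrix

/-- Evaluation of an nc polynomial at a tuple of bounded operators on a Hilbert space. -/
noncomputable def ncEvalOp {n : ℕ} {H : Type} [NormedAddCommGroup H]
    [InnerProductSpace ℝ H] (A : Fin n → (H →L[ℝ] H)) : NCPoly n →ₐ[ℝ] (H →L[ℝ] H) :=
  MonoidAlgebra.lift ℝ _ (FreeMonoid (Fin n)) (FreeMonoid.lift A)

/-!
If `f ∉ Q(𝔤)`, separate `f` from `Q(𝔤)`: by the Archimedean property `1` is an order unit of
the cone `Q(𝔤) + ℝ≥0 · (-f) + {a | a⋆ = -a}`, which contains no negative multiple of `1` since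
`f ∉ Q(𝔤)`, so the Riesz extension theorem yields a linear functional `L` with
`L 1 = 1`, `L ≥ 0` on `Q(𝔤)`, `L f ≤ 0` and `L ∘ ⋆ = L`. The GNS construction for
`⟪p, q⟫ = L (q⋆ p)` then gives a Hilbert space on which left multiplication by each letter is
bounded (Archimedean property again) and self-adjoint, every `g ∈ 𝔤` acts positively, and the
cyclic vector `ξ = [1]` has `⟪f(A) ξ, ξ⟫ = L f ≤ 0`, contradicting the hypothesis on `f`.
-/

section Star

variable {n : ℕ}

lemma ncStar_add (f g : NCPoly n) : ncStar (f + g) = ncStar f + ncStar g :=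
  congrArg MonoidAlgebra.ofCoeff Finsupp.mapDomain_add

lemma ncStar_smul (c : ℝ) (f : NCPoly n) : ncStar (c • f) = c • ncStar f :=
  congrArg MonoidAlgebra.ofCoeff (Finsupp.mapDomain_smul c f.coeff)

noncomputable def ncStarₗ (n : ℕ) : NCPoly n →ₗ[ℝ] NCPoly n where
  toFun := ncStar
  map_add' := ncStar_add
  map_smul' := ncStar_smul

@[simp]
lemma ncStarₗ_apply (f : NCPoly n) : ncStarₗ n f = ncStar f := rfl

lemma ncStar_zero : ncStar (0 : NCPoly n) = 0 := (ncStarₗ n).map_zero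

lemma ncStar_neg (f : NCPoly n) : ncStar (-f) = -ncStar f := (ncStarₗ n).map_neg f

lemma ncStar_sub (f g : NCPoly n) : ncStar (f - g) = ncStar f - ncStar g :=
  (ncStarₗ n).map_sub f g

lemma ncStar_sum {ι : Type*} (s : Finset ι) (f : ι → NCPoly n) :
    ncStar (∑ i ∈ s, f i) = ∑ i ∈ s, ncStar (f i) :=
  map_sum (ncStarₗ n) f s

lemma ncStar_single (w : FreeMonoid (Fin n)) (r : ℝ) :
    ncStar (MonoidAlgebra.single w r : NCPoly n) = MonoidAlgebra.single w.reverse r :=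
  congrArg MonoidAlgebra.ofCoeff Finsupp.mapDomain_single

lemma ncStar_one : ncStar (1 : NCPoly n) = 1 :=
  ncStar_single 1 1

lemma ncStar_ncX (i : Fin n) : ncStar (ncX i) = ncX i :=
  ncStar_single (FreeMonoid.of i) 1

lemma ncStar_mul (f g : NCPoly n) : ncStar (f * g) = ncStar g * ncStar f := by
  induction f using MonoidAlgebra.induction_linear with
  | zero => simp only [zero_mul, ncStar_zero, mul_zero]
  | add a b ha hb => rw [add_mul, ncStar_add, ha, hb, ncStar_add, mul_add]
  | single w r =>
    induction g using MonoidAlgebra.induction_linear with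
    | zero => simp only [mul_zero, ncStar_zero, zero_mul]
    | add a b ha hb => rw [mul_add, ncStar_add, ha, hb, ncStar_add, add_mul]
    | single w' r' =>
      rw [MonoidAlgebra.single_mul_single, ncStar_single, ncStar_single, ncStar_single,
        MonoidAlgebra.single_mul_single, mul_comm r' r, ← FreeMonoid.reverse_mul]

lemma ncStar_ncStar (f : NCPoly n) : ncStar (ncStar f) = f := by
  rw [ncStar, ncStar, MonoidAlgebra.coeff_ofCoeff, ← Finsupp.mapDomain_comp,
    show FreeMonoid.reverse ∘ FreeMonoid.reverse = (id : FreeMonoid (Fin n) → _) by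
      funext w; simp, Finsupp.mapDomain_id, MonoidAlgebra.ofCoeff_coeff]

end Star

namespace QModule

variable {n : ℕ} {G : Finset (NCPoly n)}

lemma zero_mem : (0 : NCPoly n) ∈ QModule G :=
  ⟨0, Fin.elim0, Fin.elim0, fun i => i.elim0, by simp⟩

lemma add_mem {a b : NCPoly n} (ha : a ∈ QModule G) (hb : b ∈ QModule G) :
    a + b ∈ QModule G := by
  obtain ⟨k₁, g₁, p₁, hg₁, rfl⟩ := ha
  obtain ⟨k₂, g₂, p₂, hg₂, rfl⟩ := hb
  refine ⟨k₁ + k₂, Fin.append g₁ g₂, Fin.append p₁ p₂, fun i => Fin.addCases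
    (by simpa only [Fin.append_left] using hg₁) (by simpa only [Fin.append_right] using hg₂) i,
    by simp only [Fin.sum_univ_add, Fin.append_left, Fin.append_right]⟩

lemma conj_mem {a : NCPoly n} (ha : a ∈ QModule G) (r : NCPoly n) :
    ncStar r * a * r ∈ QModule G := by
  obtain ⟨k, g, p, hg, rfl⟩ := ha
  refine ⟨k, g, fun i => p i * r, hg, ?_⟩
  simp only [Finset.mul_sum, Finset.sum_mul, ncStar_mul, mul_assoc]

lemma smul_mem {c : ℝ} (hc : 0 ≤ c) {a : NCPoly n} (ha : a ∈ QModule G) :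
    c • a ∈ QModule G := by
  obtain ⟨k, g, p, hg, rfl⟩ := ha
  refine ⟨k, g, fun i => √c • p i, hg, ?_⟩
  simp only [Finset.smul_sum, ncStar_smul, smul_mul_assoc, mul_smul_comm, smul_smul,
    Real.mul_self_sqrt hc]

lemma ncStar_mul_mul_mem {g : NCPoly n} (hg : g ∈ (G : Set (NCPoly n)) ∪ {1})
    (p : NCPoly n) : ncStar p * g * p ∈ QModule G :=
  ⟨1, fun _ => g, fun _ => p, fun _ => hg, by simp⟩

lemma mem_of_mem_generators {g : NCPoly n} (hg : g ∈ G) : g ∈ QModule G := by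
  simpa [ncStar_one] using ncStar_mul_mul_mem (Or.inl hg) (1 : NCPoly n)

lemma ncStar_mul_self_mem (p : NCPoly n) : ncStar p * p ∈ QModule G := by
  simpa using ncStar_mul_mul_mem (G := G) (Or.inr rfl) p

lemma one_mem : (1 : NCPoly n) ∈ QModule G := by
  simpa [ncStar_one] using ncStar_mul_self_mem (G := G) 1

lemma ncStar_eq (hG : ∀ g ∈ G, ncStar g = g) {a : NCPoly n} (ha : a ∈ QModule G) :
    ncStar a = a := by
  obtain ⟨k, g, p, hg, rfl⟩ := ha
  refine (ncStar_sum _ _).trans (Finset.sum_congr rfl fun i _ => ?_)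
  have hgi : ncStar (g i) = g i := by
    rcases hg i with h | h
    · exact hG _ h
    · rw [Set.mem_singleton_iff.mp h, ncStar_one]
  rw [ncStar_mul, ncStar_mul, ncStar_ncStar, hgi, mul_assoc]

def IsArchimedean (G : Finset (NCPoly n)) : Prop :=
  ∀ q : NCPoly n, ∃ R : ℕ, 0 < R ∧ (R : ℝ) • (1 : NCPoly n) - ncStar q * q ∈ QModule G

noncomputable def toPointedCone (G : Finset (NCPoly n)) : PointedCone ℝ (NCPoly n) where
  carrier := QModule G
  zero_mem' := zero_mem
  add_mem' := add_mem
  smul_mem' c _ ha := smul_mem c.2 ha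

lemma IsArchimedean.exists_smul_one_sub_mem (harch : IsArchimedean G) (u : NCPoly n) :
    ∃ R : ℝ, 0 ≤ R ∧ R • (1 : NCPoly n) - (u + ncStar u) ∈ QModule G := by
  obtain ⟨R, -, hR⟩ := harch (1 + u)
  refine ⟨R, R.cast_nonneg, ?_⟩
  have key : (R : ℝ) • (1 : NCPoly n) - (u + ncStar u) =
      ((R : ℝ) • 1 - ncStar (1 + u) * (1 + u)) + (ncStar u * u + 1) := by
    rw [ncStar_add, ncStar_one]; noncomm_ring
  rw [key]
  exact add_mem hR (add_mem (ncStar_mul_self_mem u) one_mem)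

lemma IsArchimedean.mem_of_smul_one_add_smul_mem (harch : IsArchimedean G) {f : NCPoly n}
    (hf : ncStar f = f) {c t : ℝ} (hc : c < 0) (ht : 0 ≤ t)
    (h : c • (1 : NCPoly n) + t • f ∈ QModule G) : f ∈ QModule G := by
  obtain ⟨R, hR0, hR⟩ := harch.exists_smul_one_sub_mem (-f)
  rw [ncStar_neg, hf, show R • (1 : NCPoly n) - (-f + -f) = R • 1 + (2 : ℝ) • f by module] at hR
  have hk : 0 < R * t - 2 * c := by nlinarith
  -- the multiples of `1` cancel in this combination
  have key : (R * t - 2 * c) • f = R • (c • 1 + t • f) + (-c) • (R • 1 + (2 : ℝ) • f) := by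
    module
  rw [← inv_smul_smul₀ hk.ne' f, key]
  exact smul_mem (inv_nonneg.2 hk.le) (add_mem (smul_mem hR0 h) (smul_mem (by linarith) hR))

end QModule

section Separation

open QModule

variable {n : ℕ} {G : Finset (NCPoly n)} {f : NCPoly n}

noncomputable def antisymmSubmodule (n : ℕ) : Submodule ℝ (NCPoly n) :=
  LinearMap.ker (ncStarₗ n + LinearMap.id)

lemma mem_antisymmSubmodule {a : NCPoly n} : a ∈ antisymmSubmodule n ↔ ncStar a = -a := by
  rw [antisymmSubmodule, LinearMap.mem_ker, LinearMap.add_apply, ncStarₗ_apply,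
    LinearMap.id_apply, add_eq_zero_iff_eq_neg]

-- The antisymmetric part is what makes `1` an order unit: `Q(G)` contains only symmetric elements.
noncomputable def separationCone (G : Finset (NCPoly n)) (f : NCPoly n) :
    PointedCone ℝ (NCPoly n) :=
  toPointedCone G ⊔ PointedCone.hull ℝ {-f} ⊔ (antisymmSubmodule n : PointedCone ℝ (NCPoly n))

lemma nonneg_of_smul_one_mem_separationCone (hG : ∀ g ∈ G, ncStar g = g) (hf : ncStar f = f)
    (harch : IsArchimedean G) (hfM : f ∉ QModule G) {c : ℝ}
    (hc : c • (1 : NCPoly n) ∈ separationCone G f) : 0 ≤ c := by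
  obtain ⟨x, hx, a, ha, hxa⟩ := Submodule.mem_sup.1 hc
  obtain ⟨m, hm, y, hy, rfl⟩ := Submodule.mem_sup.1 hx
  obtain ⟨t, rfl⟩ := Submodule.mem_span_singleton.1 hy
  replace ha := mem_antisymmSubmodule.1 ha
  rw [← Nonneg.coe_smul] at hxa
  -- averaging `c • 1` with its star kills the antisymmetric part
  have hsymm : c • (1 : NCPoly n) + (t : ℝ) • f = m := by
    have h := congrArg (fun v => v + ncStar v) hxa
    simp only [ncStar_add, ncStar_smul, ncStar_neg, ncStar_one, hf, ha, QModule.ncStar_eq hG hm]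
      at h
    linear_combination (norm := module) (-(1 / 2 : ℝ)) • h
  by_contra hneg
  exact hfM (harch.mem_of_smul_one_add_smul_mem hf (not_le.1 hneg) t.2 (hsymm ▸ hm))

lemma exists_smul_one_add_mem_separationCone (harch : IsArchimedean G) (y : NCPoly n) :
    ∃ R : ℝ, R • (1 : NCPoly n) + y ∈ separationCone G f := by
  obtain ⟨R, -, hR⟩ := harch.exists_smul_one_sub_mem (-(1 / 2 : ℝ) • y)
  refine ⟨R, ?_⟩
  have ha : (1 / 2 : ℝ) • (y - ncStar y) ∈ antisymmSubmodule n := by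
    rw [mem_antisymmSubmodule, ncStar_smul, ncStar_sub, ncStar_ncStar]; module
  have hsplit : R • (1 : NCPoly n) + y =
      (R • 1 - (-(1 / 2 : ℝ) • y + ncStar (-(1 / 2 : ℝ) • y))) + (1 / 2 : ℝ) • (y - ncStar y) := by
    rw [ncStar_smul]; module
  rw [hsplit]
  exact Submodule.add_mem_sup (Submodule.mem_sup_left hR) ha

lemma exists_separating_functional (hG : ∀ g ∈ G, ncStar g = g) (hf : ncStar f = f)
    (harch : IsArchimedean G) (hfM : f ∉ QModule G) :
    ∃ L : NCPoly n →ₗ[ℝ] ℝ, L 1 = 1 ∧ (∀ m ∈ QModule G, 0 ≤ L m) ∧ L f ≤ 0 ∧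
      ∀ v, L (ncStar v) = L v := by
  let φ : NCPoly n →ₗ.[ℝ] ℝ := LinearPMap.mkSpanSingleton (1 : NCPoly n) (1 : ℝ) one_ne_zero
  have hφ (c : ℝ) (h) : φ ⟨c • 1, h⟩ = c := by
    have h' := LinearPMap.mkSpanSingleton'_apply (σ := RingHom.id ℝ) (1 : NCPoly n) (1 : ℝ) _ c h
    rwa [RingHom.id_apply, smul_eq_mul, mul_one] at h'
  obtain ⟨L, hL, hLs⟩ := riesz_extension (separationCone G f) φ
    (fun ⟨x, hx⟩ hxs => by
      obtain ⟨c, rfl⟩ := Submodule.mem_span_singleton.1 hx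
      exact (hφ c hx).symm ▸ nonneg_of_smul_one_mem_separationCone hG hf harch hfM hxs)
    (fun y => by
      obtain ⟨R, hR⟩ := exists_smul_one_add_mem_separationCone (f := f) harch y
      exact ⟨⟨R • 1, Submodule.smul_mem _ R (Submodule.mem_span_singleton_self 1)⟩, hR⟩)
  have hQ : ∀ m ∈ QModule G, 0 ≤ L m := fun m hm =>
    hLs m (Submodule.mem_sup_left (Submodule.mem_sup_left hm))
  have hanti : ∀ a ∈ antisymmSubmodule n, L a = 0 := fun a ha => by
    have h₁ := hLs a (Submodule.mem_sup_right ha)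
    have h₂ := hLs (-a) (Submodule.mem_sup_right ((antisymmSubmodule n).neg_mem ha))
    rw [map_neg] at h₂
    linarith
  refine ⟨L, ?_, hQ, ?_, fun v => ?_⟩
  · exact (hL _).trans (LinearPMap.mkSpanSingleton_apply ℝ ℝ one_ne_zero 1)
  · simpa using hLs (-f) (Submodule.mem_sup_left (Submodule.mem_sup_right
      (Submodule.mem_span_singleton_self _)))
  · have := hanti (ncStar v - v) (by
      rw [mem_antisymmSubmodule, ncStar_sub, ncStar_ncStar, neg_sub])
    rwa [map_sub, sub_eq_zero] at this

end Separation

section Representation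

variable {n : ℕ} {H : Type} [NormedAddCommGroup H] [InnerProductSpace ℝ H]

lemma ncEvalOp_ncX (A : Fin n → H →L[ℝ] H) (i : Fin n) : ncEvalOp A (ncX i) = A i := by
  rw [ncEvalOp, ncX, MonoidAlgebra.lift_of, FreeMonoid.lift_eval_of]

lemma ncEvalOp_apply_of_apply_ncX_mul (A : Fin n → H →L[ℝ] H) (j : NCPoly n →ₗ[ℝ] H)
    (hA : ∀ i p, A i (j p) = j (ncX i * p)) (q p : NCPoly n) :
    ncEvalOp A q (j p) = j (q * p) := by
  induction q using MonoidAlgebra.induction_on generalizing p with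
  | of w =>
    induction w using FreeMonoid.inductionOn' generalizing p with
    | one => rw [map_one, map_one, one_mul, one_apply_eq_self]
    | of_mul i w ih =>
      rw [map_mul, map_mul, mul_apply_eq_comp, ih, ← ncX, ncEvalOp_ncX, hA, mul_assoc]
  | add q q' hq hq' => rw [map_add, add_apply, hq, hq', add_mul, map_add]
  | smul c q hq => rw [map_smul, smul_apply, hq, smul_mul_assoc, map_smul]

end Representation

namespace UniformSpace.Completion

variable {E : Type*} [SeminormedAddCommGroup E] [InnerProductSpace ℝ E]

lemma isSelfAdjoint_of_inner_coe {T : Completion E →L[ℝ] Completion E}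
    (hT : ∀ x y : E, inner ℝ (T x) (y : Completion E) = inner ℝ (x : Completion E) (T y)) :
    IsSelfAdjoint T := by
  refine ContinuousLinearMap.isSelfAdjoint_iff_isSymmetric.2 fun v w => ?_
  induction v, w using Completion.induction_on₂ with
  | hp =>
    exact isClosed_eq ((T.continuous.comp continuous_fst).inner continuous_snd)
      (continuous_fst.inner (T.continuous.comp continuous_snd))
  | ih x y => exact hT x y

lemma inner_apply_self_nonneg_of_coe {T : Completion E →L[ℝ] Completion E}
    (hT : ∀ x : E, 0 ≤ inner ℝ (T x) (x : Completion E)) (v : Completion E) :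
    0 ≤ inner ℝ (T v) v := by
  induction v using Completion.induction_on with
  | hp => exact isClosed_le continuous_const (T.continuous.inner continuous_id)
  | ih x => exact hT x

end UniformSpace.Completion

structure NCPosFunctional (n : ℕ) where
  toLinearMap : NCPoly n →ₗ[ℝ] ℝ
  map_ncStar : ∀ v, toLinearMap (ncStar v) = toLinearMap v
  nonneg_ncStar_mul_self : ∀ p, 0 ≤ toLinearMap (ncStar p * p)

namespace NCPosFunctional

open UniformSpace

variable {n : ℕ} (φ : NCPosFunctional n)

-- `NCPoly n` with the semi-inner product `⟪p, q⟫ = φ (q⋆ p)`; passing to the completion also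
-- divides out the null vectors.
def GNSSpace (_φ : NCPosFunctional n) : Type := NCPoly n

noncomputable instance : AddCommGroup φ.GNSSpace := inferInstanceAs (AddCommGroup (NCPoly n))

noncomputable instance : Module ℝ φ.GNSSpace := inferInstanceAs (Module ℝ (NCPoly n))

noncomputable def toGNS : NCPoly n ≃ₗ[ℝ] φ.GNSSpace := LinearEquiv.refl ℝ (NCPoly n)

noncomputable instance preInnerProductCore : PreInnerProductSpace.Core ℝ φ.GNSSpace where
  inner p q := φ.toLinearMap (ncStar (φ.toGNS.symm q) * φ.toGNS.symm p)
  conj_inner_symm p q := by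
    rw [starRingEnd_apply, star_trivial, ← φ.map_ncStar, ncStar_mul, ncStar_ncStar]
  re_inner_nonneg p := φ.nonneg_ncStar_mul_self _
  add_left p q r := by simp only [map_add, mul_add]
  smul_left p q c := by
    simp only [map_smul, mul_smul_comm, smul_eq_mul, starRingEnd_apply, star_trivial]

noncomputable instance : SeminormedAddCommGroup φ.GNSSpace :=
  InnerProductSpace.Core.toSeminormedAddCommGroup (𝕜 := ℝ)

noncomputable instance : InnerProductSpace ℝ φ.GNSSpace :=
  InnerProductSpace.ofCore φ.preInnerProductCore

lemma inner_toGNS (p q : NCPoly n) :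
    inner ℝ (φ.toGNS p) (φ.toGNS q) = φ.toLinearMap (ncStar q * p) :=
  rfl

lemma norm_toGNS_sq (p : NCPoly n) : ‖φ.toGNS p‖ ^ 2 = φ.toLinearMap (ncStar p * p) :=
  (real_inner_self_eq_norm_sq _).symm

lemma norm_toGNS_mul_le {G : Finset (NCPoly n)} (hφ : ∀ m ∈ QModule G, 0 ≤ φ.toLinearMap m)
    {q : NCPoly n} {R : ℝ} (hR : R • 1 - ncStar q * q ∈ QModule G) (p : NCPoly n) :
    ‖φ.toGNS (q * p)‖ ≤ √R * ‖φ.toGNS p‖ := by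
  have h := hφ _ (QModule.conj_mem hR p)
  rw [show ncStar p * (R • 1 - ncStar q * q) * p = R • (ncStar p * p) - ncStar (q * p) * (q * p)
    by rw [ncStar_mul]; noncomm_ring, map_sub, map_smul, ← norm_toGNS_sq, ← norm_toGNS_sq,
    smul_eq_mul, sub_nonneg] at h
  rw [← Real.sqrt_sq (norm_nonneg _), ← Real.sqrt_sq (norm_nonneg (φ.toGNS p)),
    ← Real.sqrt_mul' _ (sq_nonneg _)]
  exact Real.sqrt_le_sqrt h

noncomputable def mulLeftCLM (q : NCPoly n)
    (hq : ∃ C, ∀ p, ‖φ.toGNS (q * p)‖ ≤ C * ‖φ.toGNS p‖) :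
    Completion φ.GNSSpace →L[ℝ] Completion φ.GNSSpace :=
  (Completion.toComplL.comp <| LinearMap.mkContinuousOfExistsBound
    (φ.toGNS.toLinearMap ∘ₗ LinearMap.mulLeft ℝ q ∘ₗ φ.toGNS.symm.toLinearMap)
    (hq.imp fun _ hC x => by simpa using hC (φ.toGNS.symm x))).extend Completion.toComplL

lemma mulLeftCLM_coe (q : NCPoly n) (hq : ∃ C, ∀ p, ‖φ.toGNS (q * p)‖ ≤ C * ‖φ.toGNS p‖)
    (p : NCPoly n) :
    φ.mulLeftCLM q hq (φ.toGNS p) = (φ.toGNS (q * p) : Completion φ.GNSSpace) :=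
  ContinuousLinearMap.extend_eq _ Completion.denseRange_coe
    (Completion.isUniformInducing_coe _) _

section Archimedean

variable {G : Finset (NCPoly n)} (harch : QModule.IsArchimedean G)
  (hφ : ∀ m ∈ QModule G, 0 ≤ φ.toLinearMap m)
include harch hφ

lemma exists_norm_toGNS_mul_le (q : NCPoly n) :
    ∃ C, ∀ p, ‖φ.toGNS (q * p)‖ ≤ C * ‖φ.toGNS p‖ :=
  let ⟨R, _, hR⟩ := harch q
  ⟨√R, φ.norm_toGNS_mul_le hφ hR⟩

noncomputable def gnsTuple : Fin n → Completion φ.GNSSpace →L[ℝ] Completion φ.GNSSpace :=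
  fun i => φ.mulLeftCLM (ncX i) (φ.exists_norm_toGNS_mul_le harch hφ (ncX i))

lemma ncEvalOp_gnsTuple_coe (q p : NCPoly n) :
    ncEvalOp (φ.gnsTuple harch hφ) q (φ.toGNS p) = (φ.toGNS (q * p) : Completion φ.GNSSpace) :=
  ncEvalOp_apply_of_apply_ncX_mul _ (Completion.toComplL.toLinearMap ∘ₗ φ.toGNS.toLinearMap)
    (fun i => φ.mulLeftCLM_coe (ncX i) _) q p

lemma inner_ncEvalOp_gnsTuple (q p p' : NCPoly n) :
    inner ℝ (ncEvalOp (φ.gnsTuple harch hφ) q (φ.toGNS p)) (φ.toGNS p' : Completion φ.GNSSpace) =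
      φ.toLinearMap (ncStar p' * q * p) := by
  rw [ncEvalOp_gnsTuple_coe, Completion.inner_coe, inner_toGNS, mul_assoc]

lemma isSelfAdjoint_gnsTuple (i : Fin n) : IsSelfAdjoint (φ.gnsTuple harch hφ i) := by
  refine Completion.isSelfAdjoint_of_inner_coe fun x y => ?_
  obtain ⟨p, rfl⟩ := φ.toGNS.surjective x
  obtain ⟨p', rfl⟩ := φ.toGNS.surjective y
  rw [gnsTuple, mulLeftCLM_coe, mulLeftCLM_coe, Completion.inner_coe, Completion.inner_coe,
    inner_toGNS, inner_toGNS, ncStar_mul, ncStar_ncX, mul_assoc]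

lemma inner_ncEvalOp_gnsTuple_nonneg {g : NCPoly n} (hg : g ∈ QModule G)
    (v : Completion φ.GNSSpace) : 0 ≤ inner ℝ (ncEvalOp (φ.gnsTuple harch hφ) g v) v := by
  refine Completion.inner_apply_self_nonneg_of_coe (fun x => ?_) v
  obtain ⟨p, rfl⟩ := φ.toGNS.surjective x
  rw [inner_ncEvalOp_gnsTuple]
  exact hφ _ (QModule.conj_mem hg p)

end Archimedean

lemma coe_toGNS_one_ne_zero (h1 : φ.toLinearMap 1 = 1) :
    (φ.toGNS 1 : Completion φ.GNSSpace) ≠ 0 := by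
  intro h
  have := congrArg (fun v => inner ℝ v v) h
  simp only [Completion.inner_coe, inner_toGNS, ncStar_one, one_mul, h1, inner_zero_left] at this
  exact one_ne_zero this

end NCPosFunctional

/-- **nc Putinar Positivstellensatz.** Suppose `Q(𝔤)` is Archimedean and
`f` is symmetric. If `f(A)` is positive definite at every tuple of bounded self-adjoint
operators on a Hilbert space making each `g ∈ 𝔤` positive, then `f ∈ Q(𝔤)`. -/
theorem nc_putinar {n : ℕ} (G : Finset (NCPoly n)) (hG : ∀ g ∈ G, ncStar g = g)
    (harch : ∀ q : NCPoly n, ∃ R : ℕ, 0 < R ∧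
        (R : ℝ) • (1 : NCPoly n) - ncStar q * q ∈ QModule G)
    (f : NCPoly n) (hf : ncStar f = f)
    (hpos : ∀ (H : Type) [NormedAddCommGroup H] [InnerProductSpace ℝ H] [CompleteSpace H]
      (A : Fin n → (H →L[ℝ] H)), (∀ i, IsSelfAdjoint (A i)) →
      (∀ g ∈ G, ∀ v : H, 0 ≤ (inner ℝ (ncEvalOp A g v) v : ℝ)) →
      ∀ v : H, v ≠ 0 → 0 < (inner ℝ (ncEvalOp A f v) v : ℝ)) :
    f ∈ QModule G := by
  by_contra hfM
  obtain ⟨L, hL1, hLQ, hLf, hLstar⟩ := exists_separating_functional hG hf harch hfM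
  let φ : NCPosFunctional n := ⟨L, hLstar, fun p => hLQ _ (QModule.ncStar_mul_self_mem p)⟩
  have hξ := hpos _ (φ.gnsTuple harch hLQ) (φ.isSelfAdjoint_gnsTuple harch hLQ)
    (fun g hg => φ.inner_ncEvalOp_gnsTuple_nonneg harch hLQ (QModule.mem_of_mem_generators hg))
    _ (φ.coe_toGNS_one_ne_zero hL1)
  have hval := φ.inner_ncEvalOp_gnsTuple harch hLQ f 1 1
  rw [ncStar_one, one_mul, mul_one] at hval
  exact hLf.not_gt (hval ▸ hξ)
end

section
/- (Tsirelson bound for the CHSH inequality.) Let X₁, X₂, Y₁, Y₂ be real symmetric matrices of a common size satisfying Xᵢ² = I, Yⱼ² = I, and XᵢYⱼ = YⱼXᵢ for all i, j ∈ {1,2}. Then for every unit vector v, vᵀ (X₁Y₁ + X₁Y₂ + X₂Y₁ − X₂Y₂) v ≤ 2√2; moreover, this bound 2√2 is attained by some such matrices and unit vector. -/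
/-!
The bound is Tsirelson's operator inequality `A₀B₀ + A₀B₁ + A₁B₀ - A₁B₁ ≤ 2√2 • 1` for
self-adjoint involutions `Aᵢ` commuting with `Bⱼ` (`tsirelson_inequality`, a sum-of-squares
certificate), read in the Loewner order on real symmetric matrices and evaluated at a unit vector.

Equality is attained by Tsirelson's two-qubit strategy: Alice measures `σ_z` and `σ_x`, Bob measures
along their bisectors `(σ_z ± σ_x)/√2`. The CHSH operator is then `√2 (σ_z ⊗ σ_z + σ_x ⊗ σ_x)`, and
both products fix the maximally entangled state `(e₀₀ + e₁₁)/√2 = vec 1 / √2`, whose value is `2√2`.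
-/

open scoped Matrix

open Matrix Kronecker
open scoped MatrixOrder

def chshOperator {R : Type*} [Ring R] (A₀ A₁ B₀ B₁ : R) : R :=
  A₀ * B₀ + A₀ * B₁ + A₁ * B₀ - A₁ * B₁

theorem Matrix.star_eq_self_iff_isSymm {ι : Type*} {A : Matrix ι ι ℝ} :
    star A = A ↔ A.IsSymm := by
  rw [← isHermitian_iff_isSymm]; rfl

section RealSymmetric

variable {ι : Type*} [Fintype ι] [DecidableEq ι]

theorem Matrix.dotProduct_mulVec_le_of_le_smul_one {M : Matrix ι ι ℝ} {c : ℝ} (h : M ≤ c • 1)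
    (v : ι → ℝ) : v ⬝ᵥ M *ᵥ v ≤ c * (v ⬝ᵥ v) := by
  have := (le_iff.mp h).dotProduct_mulVec_nonneg v
  rwa [star_trivial, sub_mulVec, smul_mulVec, one_mulVec, dotProduct_sub, dotProduct_smul,
    smul_eq_mul, sub_nonneg] at this

theorem isCHSHTuple_iff_forall {X Y : Fin 2 → Matrix ι ι ℝ} :
    IsCHSHTuple (X 0) (X 1) (Y 0) (Y 1) ↔
      (∀ i, (X i).IsSymm) ∧ (∀ j, (Y j).IsSymm) ∧ (∀ i, X i ^ 2 = 1) ∧ (∀ j, Y j ^ 2 = 1) ∧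
        ∀ i j, X i * Y j = Y j * X i := by
  simp only [Fin.forall_fin_two, ← star_eq_self_iff_isSymm]
  constructor
  · intro T
    exact ⟨⟨T.A₀_sa, T.A₁_sa⟩, ⟨T.B₀_sa, T.B₁_sa⟩, ⟨T.A₀_inv, T.A₁_inv⟩, ⟨T.B₀_inv, T.B₁_inv⟩,
      ⟨T.A₀B₀_commutes, T.A₀B₁_commutes⟩, T.A₁B₀_commutes, T.A₁B₁_commutes⟩
  · rintro ⟨⟨sa₀, sa₁⟩, ⟨sb₀, sb₁⟩, ⟨ia₀, ia₁⟩, ⟨ib₀, ib₁⟩, ⟨c₀₀, c₀₁⟩, c₁₀, c₁₁⟩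
    exact ⟨ia₀, ia₁, ib₀, ib₁, sa₀, sa₁, sb₀, sb₁, c₀₀, c₀₁, c₁₀, c₁₁⟩

theorem IsCHSHTuple.dotProduct_chshOperator_mulVec_le {A₀ A₁ B₀ B₁ : Matrix ι ι ℝ}
    (T : IsCHSHTuple A₀ A₁ B₀ B₁) {v : ι → ℝ} (hv : v ⬝ᵥ v = 1) :
    v ⬝ᵥ chshOperator A₀ A₁ B₀ B₁ *ᵥ v ≤ 2 * √2 :=
  calc v ⬝ᵥ chshOperator A₀ A₁ B₀ B₁ *ᵥ v ≤ √2 ^ 3 * (v ⬝ᵥ v) :=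
        dotProduct_mulVec_le_of_le_smul_one (tsirelson_inequality _ _ _ _ T) v
    _ = 2 * √2 := by rw [hv, mul_one, pow_succ, Real.sq_sqrt zero_le_two]

end RealSymmetric

section Reindex

variable {m n α : Type*} [Fintype m] [Fintype n]

theorem dotProduct_reindex_mulVec [CommSemiring α] (M : Matrix m m α) (v : m → α) (e : m ≃ n) :
    v ∘ e.symm ⬝ᵥ reindex e e M *ᵥ (v ∘ e.symm) = v ⬝ᵥ M *ᵥ v := by
  simp [reindex_apply, submatrix_mulVec_equiv, dotProduct_comp_equiv_symm, Function.comp_assoc]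

variable [DecidableEq m] [DecidableEq n]

theorem IsCHSHTuple.reindex [CommRing α] [StarRing α] {A₀ A₁ B₀ B₁ : Matrix m m α}
    (T : IsCHSHTuple A₀ A₁ B₀ B₁) (e : m ≃ n) :
    IsCHSHTuple (Matrix.reindex e e A₀) (Matrix.reindex e e A₁) (Matrix.reindex e e B₀)
      (Matrix.reindex e e B₁) := by
  have hpow : ∀ {A : Matrix m m α}, A ^ 2 = 1 → Matrix.reindex e e A ^ 2 = 1 := fun h => by
    rw [← coe_reindexAlgEquiv α α e, ← map_pow, h, map_one]
  have hstar : ∀ {A : Matrix m m α}, star A = A →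
      star (Matrix.reindex e e A) = Matrix.reindex e e A := fun h => by
    rw [star_eq_conjTranspose, conjTranspose_reindex, ← star_eq_conjTranspose, h]
  have hcomm : ∀ {A B : Matrix m m α}, A * B = B * A →
      Matrix.reindex e e A * Matrix.reindex e e B =
        Matrix.reindex e e B * Matrix.reindex e e A := fun h => by
    simp only [← coe_reindexAlgEquiv α α e, ← map_mul, h]
  exact ⟨hpow T.A₀_inv, hpow T.A₁_inv, hpow T.B₀_inv, hpow T.B₁_inv, hstar T.A₀_sa, hstar T.A₁_sa,
    hstar T.B₀_sa, hstar T.B₁_sa, hcomm T.A₀B₀_commutes, hcomm T.A₀B₁_commutes,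
    hcomm T.A₁B₀_commutes, hcomm T.A₁B₁_commutes⟩

theorem chshOperator_reindex [CommRing α] (A₀ A₁ B₀ B₁ : Matrix m m α) (e : m ≃ n) :
    chshOperator (reindex e e A₀) (reindex e e A₁) (reindex e e B₀) (reindex e e B₁) =
      reindex e e (chshOperator A₀ A₁ B₀ B₁) := by
  simp only [chshOperator, ← coe_reindexAlgEquiv α α e, map_add, map_sub, map_mul]

end Reindex

section Kronecker

theorem Matrix.kronecker_sub {l m n p α : Type*} [Ring α] (A : Matrix l m α)
    (B₁ B₂ : Matrix n p α) : A ⊗ₖ (B₁ - B₂) = A ⊗ₖ B₁ - A ⊗ₖ B₂ := by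
  ext; simp [mul_sub]

variable {m n α : Type*} [Fintype m] [Fintype n] [DecidableEq m] [DecidableEq n]

theorem isCHSHTuple_kronecker [CommRing α] [StarRing α] {A₀ A₁ : Matrix m m α}
    {B₀ B₁ : Matrix n n α} (hA₀ : A₀ ^ 2 = 1) (hA₁ : A₁ ^ 2 = 1) (hB₀ : B₀ ^ 2 = 1)
    (hB₁ : B₁ ^ 2 = 1) (hA₀sa : star A₀ = A₀) (hA₁sa : star A₁ = A₁) (hB₀sa : star B₀ = B₀)
    (hB₁sa : star B₁ = B₁) :
    IsCHSHTuple (A₀ ⊗ₖ (1 : Matrix n n α)) (A₁ ⊗ₖ 1) ((1 : Matrix m m α) ⊗ₖ B₀) (1 ⊗ₖ B₁) := by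
  have hsq : ∀ {A : Matrix m m α} {B : Matrix n n α}, A ^ 2 = 1 → B ^ 2 = 1 → (A ⊗ₖ B) ^ 2 = 1 :=
    fun hA hB => by rw [sq, ← mul_kronecker_mul, ← sq, ← sq, hA, hB, one_kronecker_one]
  have hstar : ∀ {A : Matrix m m α} {B : Matrix n n α}, star A = A → star B = B →
      star (A ⊗ₖ B) = A ⊗ₖ B := fun hA hB => by
    rw [star_eq_conjTranspose, conjTranspose_kronecker, ← star_eq_conjTranspose,
      ← star_eq_conjTranspose, hA, hB]
  have hcomm : ∀ (A : Matrix m m α) (B : Matrix n n α), A ⊗ₖ 1 * (1 ⊗ₖ B) = 1 ⊗ₖ B * (A ⊗ₖ 1) :=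
    fun A B => by simp only [← mul_kronecker_mul, mul_one, one_mul]
  exact ⟨hsq hA₀ (one_pow 2), hsq hA₁ (one_pow 2), hsq (one_pow 2) hB₀, hsq (one_pow 2) hB₁,
    hstar hA₀sa (star_one _), hstar hA₁sa (star_one _), hstar (star_one _) hB₀sa,
    hstar (star_one _) hB₁sa, hcomm _ _, hcomm _ _, hcomm _ _, hcomm _ _⟩

theorem chshOperator_kronecker [CommRing α] (A₀ A₁ : Matrix m m α) (B₀ B₁ : Matrix n n α) :
    chshOperator (A₀ ⊗ₖ (1 : Matrix n n α)) (A₁ ⊗ₖ 1) ((1 : Matrix m m α) ⊗ₖ B₀) (1 ⊗ₖ B₁) =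
      A₀ ⊗ₖ (B₀ + B₁) + A₁ ⊗ₖ (B₀ - B₁) := by
  simp only [chshOperator, ← mul_kronecker_mul, mul_one, one_mul, kronecker_add, kronecker_sub]
  abel

theorem kronecker_self_mulVec_vec_one [CommRing α] {A : Matrix m m α} (hA : A * Aᵀ = 1) :
    (A ⊗ₖ A) *ᵥ vec 1 = vec 1 := by
  rw [kronecker_mulVec_vec, mul_one, hA]

theorem vec_one_dotProduct_vec_one [CommRing α] :
    vec (1 : Matrix m m α) ⬝ᵥ vec 1 = Fintype.card m := by
  rw [vec_dotProduct_vec, transpose_one, one_mul, trace_one]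

end Kronecker

theorem sq_inv_sqrt_two_smul_add {R : Type*} [Ring R] [Algebra ℝ R] {a b : R} (ha : a ^ 2 = 1)
    (hb : b ^ 2 = 1) (hab : a * b + b * a = 0) : ((√2)⁻¹ • (a + b)) ^ 2 = 1 := by
  have hsum : (a + b) ^ 2 = (2 : ℝ) • 1 := by
    rw [sq, add_mul, mul_add, mul_add, ← sq, ← sq, ha, hb, add_assoc, ← add_assoc (a * b), hab,
      zero_add, two_smul]
  rw [smul_pow, hsum, smul_smul, inv_pow, Real.sq_sqrt zero_le_two, inv_mul_cancel₀ two_ne_zero,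
    one_smul]

theorem inv_sqrt_two_smul_add_add_sub {M : Type*} [AddCommGroup M] [Module ℝ M] (a b : M) :
    (√2)⁻¹ • (a + b) + (√2)⁻¹ • (a - b) = √2 • a := by
  match_scalars <;> field_simp <;> norm_num

theorem inv_sqrt_two_smul_add_sub_sub {M : Type*} [AddCommGroup M] [Module ℝ M] (a b : M) :
    (√2)⁻¹ • (a + b) - (√2)⁻¹ • (a - b) = √2 • b := by
  match_scalars <;> field_simp <;> norm_num

def pauliZ : Matrix (Fin 2) (Fin 2) ℝ := !![1, 0; 0, -1]

def pauliX : Matrix (Fin 2) (Fin 2) ℝ := !![0, 1; 1, 0]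

theorem pauliZ_isSymm : pauliZ.IsSymm := by
  ext i j; fin_cases i <;> fin_cases j <;> rfl

theorem pauliX_isSymm : pauliX.IsSymm := by
  ext i j; fin_cases i <;> fin_cases j <;> rfl

theorem pauliZ_sq : pauliZ ^ 2 = 1 := by
  simp [pauliZ, sq, one_fin_two]

theorem pauliX_sq : pauliX ^ 2 = 1 := by
  simp [pauliX, sq, one_fin_two]

theorem pauliZ_mul_pauliX_add : pauliZ * pauliX + pauliX * pauliZ = 0 := by
  ext i j; fin_cases i <;> fin_cases j <;> simp [pauliZ, pauliX]

noncomputable def maxEntangled : Fin 2 × Fin 2 → ℝ := (√2)⁻¹ • vec 1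

theorem maxEntangled_dotProduct_self : maxEntangled ⬝ᵥ maxEntangled = 1 := by
  rw [maxEntangled, smul_dotProduct, dotProduct_smul, vec_one_dotProduct_vec_one, smul_smul,
    Fintype.card_fin, ← mul_inv, Real.mul_self_sqrt zero_le_two]
  norm_num

theorem kronecker_self_mulVec_maxEntangled {A : Matrix (Fin 2) (Fin 2) ℝ} (hA : A.IsSymm)
    (hA2 : A ^ 2 = 1) : (A ⊗ₖ A) *ᵥ maxEntangled = maxEntangled := by
  rw [maxEntangled, mulVec_smul, kronecker_self_mulVec_vec_one (by rw [hA.eq, ← sq, hA2])]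

noncomputable def tsirelsonAlice : Fin 2 → Matrix (Fin 2 × Fin 2) (Fin 2 × Fin 2) ℝ :=
  ![pauliZ ⊗ₖ 1, pauliX ⊗ₖ 1]

noncomputable def tsirelsonBob : Fin 2 → Matrix (Fin 2 × Fin 2) (Fin 2 × Fin 2) ℝ :=
  ![1 ⊗ₖ ((√2)⁻¹ • (pauliZ + pauliX)), 1 ⊗ₖ ((√2)⁻¹ • (pauliZ - pauliX))]

theorem isCHSHTuple_tsirelson :
    IsCHSHTuple (tsirelsonAlice 0) (tsirelsonAlice 1) (tsirelsonBob 0) (tsirelsonBob 1) := by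
  have hanti : pauliZ * -pauliX + -pauliX * pauliZ = 0 := by
    rw [mul_neg, neg_mul, ← neg_add, pauliZ_mul_pauliX_add, neg_zero]
  refine isCHSHTuple_kronecker pauliZ_sq pauliX_sq
    (sq_inv_sqrt_two_smul_add pauliZ_sq pauliX_sq pauliZ_mul_pauliX_add) ?_
    (star_eq_self_iff_isSymm.mpr pauliZ_isSymm) (star_eq_self_iff_isSymm.mpr pauliX_isSymm)
    (star_eq_self_iff_isSymm.mpr ((pauliZ_isSymm.add pauliX_isSymm).smul _))
    (star_eq_self_iff_isSymm.mpr ((pauliZ_isSymm.sub pauliX_isSymm).smul _))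
  rw [sub_eq_add_neg]
  exact sq_inv_sqrt_two_smul_add pauliZ_sq (by rw [neg_sq, pauliX_sq]) hanti

theorem maxEntangled_dotProduct_chshOperator_tsirelson :
    maxEntangled ⬝ᵥ chshOperator (tsirelsonAlice 0) (tsirelsonAlice 1) (tsirelsonBob 0)
      (tsirelsonBob 1) *ᵥ maxEntangled = 2 * √2 := by
  simp only [tsirelsonAlice, tsirelsonBob, cons_val_zero, cons_val_one]
  rw [chshOperator_kronecker, inv_sqrt_two_smul_add_add_sub, inv_sqrt_two_smul_add_sub_sub,
    kronecker_smul, kronecker_smul, add_mulVec, smul_mulVec, smul_mulVec,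
    kronecker_self_mulVec_maxEntangled pauliZ_isSymm pauliZ_sq,
    kronecker_self_mulVec_maxEntangled pauliX_isSymm pauliX_sq, ← two_smul ℝ (√2 • maxEntangled),
    smul_smul, dotProduct_smul, maxEntangled_dotProduct_self, smul_eq_mul, mul_one]

/-- **Tsirelson bound for CHSH.** For real symmetric matrices
`X₁, X₂, Y₁, Y₂` of a common size with `Xᵢ² = I`, `Yⱼ² = I` and `XᵢYⱼ = YⱼXᵢ`, every unit
vector `v` satisfies `vᵀ(X₁Y₁ + X₁Y₂ + X₂Y₁ - X₂Y₂)v ≤ 2√2`, and the bound is attained. -/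
theorem chsh_tsirelson_bound :
    (∀ (r : ℕ) (X Y : Fin 2 → Matrix (Fin r) (Fin r) ℝ),
      (∀ i, (X i).IsSymm) → (∀ j, (Y j).IsSymm) →
      (∀ i, X i ^ 2 = 1) → (∀ j, Y j ^ 2 = 1) →
      (∀ i j, X i * Y j = Y j * X i) →
      ∀ v : Fin r → ℝ, v ⬝ᵥ v = 1 →
        v ⬝ᵥ (X 0 * Y 0 + X 0 * Y 1 + X 1 * Y 0 - X 1 * Y 1).mulVec v ≤
          2 * Real.sqrt 2)
    ∧ (∃ (r : ℕ) (X Y : Fin 2 → Matrix (Fin r) (Fin r) ℝ) (v : Fin r → ℝ),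
      (∀ i, (X i).IsSymm) ∧ (∀ j, (Y j).IsSymm) ∧
      (∀ i, X i ^ 2 = 1) ∧ (∀ j, Y j ^ 2 = 1) ∧
      (∀ i j, X i * Y j = Y j * X i) ∧ v ⬝ᵥ v = 1 ∧
      v ⬝ᵥ (X 0 * Y 0 + X 0 * Y 1 + X 1 * Y 0 - X 1 * Y 1).mulVec v =
        2 * Real.sqrt 2) := by
  refine ⟨fun r X Y hX hY hX2 hY2 hXY v hv =>
    (isCHSHTuple_iff_forall.mpr ⟨hX, hY, hX2, hY2, hXY⟩).dotProduct_chshOperator_mulVec_le hv, ?_⟩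
  let e : Fin 2 × Fin 2 ≃ Fin (2 * 2) := finProdFinEquiv
  obtain ⟨hX, hY, hX2, hY2, hXY⟩ := (isCHSHTuple_iff_forall
    (X := fun i => reindex e e (tsirelsonAlice i)) (Y := fun j => reindex e e (tsirelsonBob j))).mp
      (isCHSHTuple_tsirelson.reindex e)
  refine ⟨2 * 2, _, _, maxEntangled ∘ e.symm, hX, hY, hX2, hY2, hXY, ?_, ?_⟩
  · simpa [dotProduct_comp_equiv_symm, Function.comp_assoc] using maxEntangled_dotProduct_self
  · show _ ⬝ᵥ chshOperator _ _ _ _ *ᵥ _ = _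
    rw [chshOperator_reindex, dotProduct_reindex_mulVec]
    exact maxEntangled_dotProduct_chshOperator_tsirelson
end
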